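/- arXiv:0902.0132 — 3 statements merged into one kernel-verified Lean document; each statement's English description precedes it below -/
import Mathlib

section
/- Szemerédi Regularity Lemma: for every ε > 0 there is a positive integer k(ε) such that every finite simple graph G = (V,E) on at least k(ε) nodes admits an equipartition {V_1,…,V_k} of V with 1/ε ≤ k ≤ k(ε) such that for all but at most ε k² of the pairs of indices 1 ≤ i < j ≤ k, the bipartite graph G[V_i,V_j] is ε-regular. -/
open Finset
open scoped Classical

-- The number of edges of `G` between the vertex sets `X` and `Y`.
noncomputable def eCount {V : Type} (G : SimpleGraph V) (X Y : Finset V) : ℕ :=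
  ∑ x ∈ X, ∑ y ∈ Y, if G.Adj x y then 1 else 0

-- The edge density `d_G(X,Y) = e_G(X,Y)/(|X|·|Y|)`.
noncomputable def eDensity {V : Type} (G : SimpleGraph V) (X Y : Finset V) : ℝ :=
  (eCount G X Y : ℝ) / ((X.card : ℝ) * (Y.card : ℝ))

-- The bipartite graph `G[A,B]` is `ε`-regular.
def IsEpsRegularPair {V : Type} (ε : ℝ) (G : SimpleGraph V) (A B : Finset V) : Prop :=
  ∀ X ⊆ A, ∀ Y ⊆ B, ε * (A.card : ℝ) < (X.card : ℝ) → ε * (B.card : ℝ) < (Y.card : ℝ) →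
    |eDensity G X Y - eDensity G A B| ≤ ε

lemma eCount_eq {V : Type} (G : SimpleGraph V) [DecidableRel G.Adj] (X Y : Finset V) :
    eCount G X Y = (Rel.interedges G.Adj X Y).card := by
  unfold eCount
  rw [Rel.interedges, Finset.card_filter, Finset.sum_product]
  congr!

lemma eDensity_eq {V : Type} (G : SimpleGraph V) [DecidableRel G.Adj] (X Y : Finset V) :
    eDensity G X Y = ((G.edgeDensity X Y : ℚ) : ℝ) := by
  rw [eDensity, SimpleGraph.edgeDensity, Rel.edgeDensity, eCount_eq]
  push_cast
  ring

lemma isUniform_imp {V : Type} (G : SimpleGraph V) [DecidableRel G.Adj] {ε : ℝ}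
    {A B : Finset V} (h : G.IsUniform ε A B) : IsEpsRegularPair ε G A B := by
  intro X hX Y hY hX' hY'
  rw [eDensity_eq, eDensity_eq]
  exact le_of_lt (h hX hY (by linarith [mul_comm ε (A.card : ℝ)])
    (by linarith [mul_comm ε (B.card : ℝ)]))

/-- Szemerédi Regularity Lemma. -/
theorem szemeredi_regularity_lemma (ε : ℝ) (hε : 0 < ε) :
    ∃ K : ℕ, 0 < K ∧
      ∀ (V : Type) [Fintype V] (G : SimpleGraph V), K ≤ Fintype.card V →
        ∃ (k : ℕ) (P : Fin k → Finset V),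
          (1 / ε ≤ (k : ℝ)) ∧ k ≤ K ∧
          (∀ i j : Fin k, i ≠ j → Disjoint (P i) (P j)) ∧
          (Finset.univ.biUnion P = (Finset.univ : Finset V)) ∧
          (∀ i : Fin k, Fintype.card V / k ≤ (P i).card ∧
            (P i).card ≤ (Fintype.card V + k - 1) / k) ∧
          (((Finset.univ.filter (fun p : Fin k × Fin k =>
              p.1 < p.2 ∧ ¬ IsEpsRegularPair ε G (P p.1) (P p.2))).card : ℝ) ≤ ε * (k : ℝ) ^ 2) := by
  set l : ℕ := max 1 ⌈1 / ε⌉₊ with hl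
  refine ⟨SzemerediRegularity.bound ε l, SzemerediRegularity.bound_pos ε l, ?_⟩
  intro V _ G hcard
  obtain ⟨P, hequi, hlk, hkK, hunif⟩ :=
    szemeredi_regularity G hε (le_trans (SzemerediRegularity.le_bound ε l) hcard)
  set k := P.parts.card with hk
  have hk0 : 0 < k := lt_of_lt_of_le (le_max_left 1 _) hlk
  set e : Fin k ≃ {x // x ∈ P.parts} := P.parts.equivFin.symm with he
  set Q : Fin k → Finset V := fun i => (e i : Finset V) with hQ
  have hQinj : Function.Injective Q := fun i j hij => by
    exact e.injective (Subtype.ext hij)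
  have hQmem : ∀ i, Q i ∈ P.parts := fun i => (e i).2
  have hn : (Finset.univ : Finset V).card = Fintype.card V := Finset.card_univ
  have hQsurj : ∀ t ∈ P.parts, ∃ i, Q i = t := fun t ht =>
    ⟨e.symm ⟨t, ht⟩, by simp [hQ]⟩
  clear_value Q e
  clear hQ he
  clear_value k
  refine ⟨k, Q, ?_, hkK, ?_, ?_, ?_, ?_⟩
  · calc (1 / ε : ℝ) ≤ (⌈1 / ε⌉₊ : ℝ) := Nat.le_ceil _
      _ ≤ (l : ℝ) := by exact_mod_cast Nat.cast_le.2 (le_max_right 1 _)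
      _ ≤ (k : ℝ) := by exact_mod_cast hlk
  · intro i j hij
    exact P.disjoint (hQmem i) (hQmem j) (fun h => hij (hQinj h))
  · ext a
    simp only [Finset.mem_biUnion, Finset.mem_univ, iff_true, true_and]
    obtain ⟨t, ht, hat⟩ := P.exists_mem (Finset.mem_univ a)
    obtain ⟨i, hi⟩ := hQsurj t ht
    exact ⟨i, hi ▸ hat⟩
  · intro i
    have h1 := hequi.average_le_card_part (hQmem i)
    have h2 := hequi.card_part_le_average_add_one (hQmem i)
    rw [hn, ← hk] at h1 h2
    refine ⟨h1, ?_⟩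
    rw [Nat.le_div_iff_mul_le hk0]
    rcases Nat.lt_or_ge (Q i).card (Fintype.card V / k + 1) with hc | hc
    · calc (Q i).card * k ≤ (Fintype.card V / k) * k :=
            Nat.mul_le_mul_right _ (Nat.lt_succ_iff.1 hc)
        _ ≤ Fintype.card V := Nat.div_mul_le_self _ k
        _ ≤ Fintype.card V + k - 1 := by omega
    · have hceq : (Q i).card = Fintype.card V / k + 1 := le_antisymm h2 hc
      have hsum : ∑ p ∈ P.parts, p.card = Fintype.card V := by rw [P.sum_card_parts, hn]
      have hlt : ∑ p ∈ P.parts, (Fintype.card V / k) < ∑ p ∈ P.parts, p.card := by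
        refine Finset.sum_lt_sum (fun p hp => ?_) ⟨Q i, hQmem i, ?_⟩
        · have := hequi.average_le_card_part hp; rwa [hn, ← hk] at this
        · omega
      rw [hsum, Finset.sum_const, smul_eq_mul, ← hk] at hlt
      have h3 : k * (Fintype.card V / k) + 1 ≤ Fintype.card V := hlt
      have hmk : (Fintype.card V / k + 1) * k = k * (Fintype.card V / k) + k := by ring
      rw [hceq, hmk]
      omega
  · have hmap : ∀ p ∈ Finset.univ.filter (fun p : Fin k × Fin k =>
        p.1 < p.2 ∧ ¬ IsEpsRegularPair ε G (Q p.1) (Q p.2)),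
        (Q p.1, Q p.2) ∈ P.nonUniforms G ε := by
      intro p hp
      rw [Finset.mem_filter] at hp
      rw [Finpartition.mk_mem_nonUniforms]
      refine ⟨hQmem _, hQmem _, fun h => hp.2.1.ne (hQinj h), fun h => hp.2.2 ?_⟩
      exact isUniform_imp G h
    have hinj : Set.InjOn (fun p : Fin k × Fin k => (Q p.1, Q p.2))
        (Finset.univ.filter (fun p : Fin k × Fin k =>
          p.1 < p.2 ∧ ¬ IsEpsRegularPair ε G (Q p.1) (Q p.2)) : Finset (Fin k × Fin k)) := by
      intro p _ q _ hpq
      simp only [Prod.mk.injEq] at hpq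
      exact Prod.ext (hQinj hpq.1) (hQinj hpq.2)
    have hle := Finset.card_le_card_of_injOn _ hmap hinj
    calc ((Finset.univ.filter (fun p : Fin k × Fin k =>
            p.1 < p.2 ∧ ¬ IsEpsRegularPair ε G (Q p.1) (Q p.2))).card : ℝ)
        ≤ ((P.nonUniforms G ε).card : ℝ) := by exact_mod_cast hle
      _ ≤ ((k * (k - 1) : ℕ) : ℝ) * ε := by rw [hk]; exact hunif
      _ ≤ ε * (k : ℝ) ^ 2 := by
          have : ((k * (k - 1) : ℕ) : ℝ) ≤ (k : ℝ) ^ 2 := by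
            have : (k * (k - 1) : ℕ) ≤ k ^ 2 := by
              calc k * (k - 1) ≤ k * k := Nat.mul_le_mul_left _ (Nat.sub_le k 1)
                _ = k ^ 2 := (sq k).symm
            exact_mod_cast this
          nlinarith [hε.le]
end

section
/- Weak Regularity Lemma (Frieze–Kannan): for every integer k ≥ 2 and every finite simple graph G = (V,E), the vertex set V has a partition P into at most k classes such that d_□(G, G_P) ≤ 2/√(log₂ k). -/
open Finset
open scoped Classical

section Aux
variable {V : Type} [Fintype V]

noncomputable def clsOf {I : Type} (c : V → I) (i : I) : Finset V :=
  Finset.univ.filter (fun v => c v = i)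

noncomputable def qW {I : Type} (β : V → V → ℝ) (c : V → I) : V → V → ℝ :=
  fun u v => (∑ x ∈ clsOf c (c u), ∑ y ∈ clsOf c (c v), β x y) /
      (((clsOf c (c u)).card : ℝ) * ((clsOf c (c v)).card : ℝ))

noncomputable def energyW {I : Type} (β : V → V → ℝ) (c : V → I) : ℝ :=
  ∑ u, ∑ v, (qW β c u v)^2

variable {I I' : Type} {β : V → V → ℝ}

lemma mem_clsOf {c : V → I} {i : I} {v : V} : v ∈ clsOf c i ↔ c v = i := by
  simp [clsOf]

lemma self_mem_clsOf (c : V → I) (u : V) : u ∈ clsOf c (c u) := mem_clsOf.2 rfl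

lemma qW_eq (c : V → I) {u v x y : V} (hx : c x = c u) (hy : c y = c v) :
    qW β c x y = qW β c u v := by
  simp only [qW, hx, hy]

lemma sum_qW (β : V → V → ℝ) (c : V → I) (i j : I) :
    ∑ x ∈ clsOf c i, ∑ y ∈ clsOf c j, qW β c x y
      = ∑ x ∈ clsOf c i, ∑ y ∈ clsOf c j, β x y := by
  rcases (clsOf c i).eq_empty_or_nonempty with h | h
  · simp [h]
  rcases (clsOf c j).eq_empty_or_nonempty with h' | h'
  · simp [h']
  have ha : (0:ℝ) < (clsOf c i).card := by exact_mod_cast card_pos.2 h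
  have hb : (0:ℝ) < (clsOf c j).card := by exact_mod_cast card_pos.2 h'
  have key : ∀ x ∈ clsOf c i, ∀ y ∈ clsOf c j, qW β c x y
      = (∑ x ∈ clsOf c i, ∑ y ∈ clsOf c j, β x y) /
        (((clsOf c i).card : ℝ) * ((clsOf c j).card : ℝ)) := by
    intro x hx y hy
    simp only [qW, mem_clsOf.1 hx, mem_clsOf.1 hy]
  rw [Finset.sum_congr rfl fun x hx => Finset.sum_congr rfl fun y hy => key x hx y hy]
  simp only [Finset.sum_const, nsmul_eq_mul]
  field_simp

/-- Orthogonality: `β - qW β c` is orthogonal to any function factoring through `c`. -/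
lemma sum_sub_qW_mul [Fintype I] (β : V → V → ℝ) (c : V → I) (h : I → I → ℝ) :
    ∑ u, ∑ v, (β u v - qW β c u v) * h (c u) (c v) = 0 := by
  have fib : ∀ g : V → ℝ, ∑ u, g u = ∑ i : I, ∑ u ∈ clsOf c i, g u := by
    intro g; rw [← Finset.sum_fiberwise Finset.univ c g]; rfl
  rw [fib]
  rw [Finset.sum_congr rfl fun i _ => Finset.sum_congr rfl fun u hu => fib _]
  refine Finset.sum_eq_zero fun i _ => ?_
  rw [Finset.sum_comm]
  refine Finset.sum_eq_zero fun j _ => ?_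
  have factor : ∑ u ∈ clsOf c i, ∑ v ∈ clsOf c j, (β u v - qW β c u v) * h (c u) (c v)
      = (∑ u ∈ clsOf c i, ∑ v ∈ clsOf c j, (β u v - qW β c u v)) * h i j := by
    rw [Finset.sum_mul]
    refine Finset.sum_congr rfl fun u hu => ?_
    rw [Finset.sum_mul]
    refine Finset.sum_congr rfl fun v hv => ?_
    rw [mem_clsOf.1 hu, mem_clsOf.1 hv]
  rw [factor]
  have : ∑ u ∈ clsOf c i, ∑ v ∈ clsOf c j, (β u v - qW β c u v) = 0 := by
    simp only [Finset.sum_sub_distrib]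
    rw [sum_qW]
    ring
  rw [this, zero_mul]


lemma qW_nonneg (hβ0 : ∀ u v, 0 ≤ β u v) (c : V → I) (u v : V) : 0 ≤ qW β c u v := by
  apply div_nonneg
  · exact Finset.sum_nonneg fun x _ => Finset.sum_nonneg fun y _ => hβ0 x y
  · positivity

lemma qW_le_one (hβ1 : ∀ u v, β u v ≤ 1) (c : V → I) (u v : V) : qW β c u v ≤ 1 := by
  have h1 : 0 < ((clsOf c (c u)).card : ℝ) := by
    exact_mod_cast card_pos.2 ⟨u, self_mem_clsOf c u⟩
  have h2 : 0 < ((clsOf c (c v)).card : ℝ) := by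
    exact_mod_cast card_pos.2 ⟨v, self_mem_clsOf c v⟩
  rw [qW, div_le_one (by positivity)]
  calc ∑ x ∈ clsOf c (c u), ∑ y ∈ clsOf c (c v), β x y
      ≤ ∑ x ∈ clsOf c (c u), ∑ y ∈ clsOf c (c v), 1 :=
        Finset.sum_le_sum fun x _ => Finset.sum_le_sum fun y _ => hβ1 x y
    _ = ((clsOf c (c u)).card : ℝ) * ((clsOf c (c v)).card : ℝ) := by
        simp [mul_comm]

lemma energyW_nonneg (c : V → I) : 0 ≤ energyW β c :=
  Finset.sum_nonneg fun u _ => Finset.sum_nonneg fun v _ => sq_nonneg _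

lemma energyW_le (hβ0 : ∀ u v, 0 ≤ β u v) (hβ1 : ∀ u v, β u v ≤ 1) (c : V → I) :
    energyW β c ≤ (Fintype.card V : ℝ)^2 := by
  have : energyW β c ≤ ∑ _u : V, ∑ _v : V, (1:ℝ) := by
    refine Finset.sum_le_sum fun u _ => Finset.sum_le_sum fun v _ => ?_
    have := qW_nonneg hβ0 c u v
    have := qW_le_one hβ1 c u v
    nlinarith
  simpa [sq] using this

/-- Pythagoras: for a refinement `c'` of `c`. -/
lemma sum_sq_sub_qW [Fintype I] [Fintype I'] (β : V → V → ℝ) (c : V → I) (c' : V → I')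
    (f : I' → I) (hf : ∀ v, c v = f (c' v)) :
    ∑ u, ∑ v, (qW β c' u v - qW β c u v)^2 = energyW β c' - energyW β c := by
  have hC : ∑ u, ∑ v, (β u v - qW β c u v) * qW β c u v = 0 :=
    sum_sub_qW_mul β c (fun i j =>
      (∑ x ∈ clsOf c i, ∑ y ∈ clsOf c j, β x y) /
        (((clsOf c i).card : ℝ) * ((clsOf c j).card : ℝ)))
  have hB : ∑ u, ∑ v, (β u v - qW β c' u v) * qW β c u v = 0 := by
    have h2 := sum_sub_qW_mul β c' (fun i' j' =>
      (∑ x ∈ clsOf c (f i'), ∑ y ∈ clsOf c (f j'), β x y) /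
        (((clsOf c (f i')).card : ℝ) * ((clsOf c (f j')).card : ℝ)))
    rw [← h2]
    refine Finset.sum_congr rfl fun u _ => Finset.sum_congr rfl fun v _ => ?_
    simp only [qW]
    rw [hf u, hf v]
  have key : ∀ u v : V, (qW β c' u v - qW β c u v)^2
      = (qW β c' u v)^2 - (qW β c u v)^2
        + 2*((β u v - qW β c' u v) * qW β c u v)
        - 2*((β u v - qW β c u v) * qW β c u v) := by
    intro u v; ring
  simp only [key, Finset.sum_add_distrib, Finset.sum_sub_distrib, ← Finset.mul_sum]
  rw [show (∑ u, ∑ v, (β u v - qW β c' u v) * qW β c u v) = 0 from hB,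
    show (∑ u, ∑ v, (β u v - qW β c u v) * qW β c u v) = 0 from hC]
  simp [energyW]

/-- Defect form: a large cut discrepancy forces an energy increment in a refinement
that "measures" `S` and `T`. -/
lemma defect_le [Fintype I] [Fintype I'] (β : V → V → ℝ) (c : V → I) (c' : V → I')
    (f : I' → I) (hf : ∀ v, c v = f (c' v)) (S T : Finset V)
    (pS : I' → Prop) (hS : ∀ v, v ∈ S ↔ pS (c' v))
    (pT : I' → Prop) (hT : ∀ v, v ∈ T ↔ pT (c' v)) :
    (∑ s ∈ S, ∑ t ∈ T, (β s t - qW β c s t))^2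
      ≤ (Fintype.card V : ℝ)^2 * (energyW β c' - energyW β c) := by
  classical
  set χ : V → V → ℝ := fun u v =>
    (if pS (c' u) then (1:ℝ) else 0) * (if pT (c' v) then (1:ℝ) else 0) with hχ
  have hind : ∀ (g : V → V → ℝ),
      ∑ u, ∑ v, g u v * χ u v = ∑ s ∈ S, ∑ t ∈ T, g s t := by
    intro g
    have hSe : ∀ u : V, (if pS (c' u) then (1:ℝ) else 0) = (if u ∈ S then 1 else 0) := by
      intro u; by_cases h : u ∈ S
      · rw [if_pos ((hS u).1 h), if_pos h]
      · rw [if_neg (fun hp => h ((hS u).2 hp)), if_neg h]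
    have hTe : ∀ v : V, (if pT (c' v) then (1:ℝ) else 0) = (if v ∈ T then 1 else 0) := by
      intro v; by_cases h : v ∈ T
      · rw [if_pos ((hT v).1 h), if_pos h]
      · rw [if_neg (fun hp => h ((hT v).2 hp)), if_neg h]
    simp only [hχ, hSe, hTe]
    rw [show (∑ s ∈ S, ∑ t ∈ T, g s t)
        = ∑ s ∈ univ.filter (· ∈ S), ∑ t ∈ univ.filter (· ∈ T), g s t by
      simp]
    rw [Finset.sum_filter]
    refine Finset.sum_congr rfl fun x _ => ?_
    by_cases hx : x ∈ S
    · simp only [if_pos hx, one_mul, Finset.sum_filter]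
      exact Finset.sum_congr rfl fun y _ => by by_cases hy : y ∈ T <;> simp [hy]
    · simp [if_neg hx]
  have horth : ∑ u, ∑ v, (β u v - qW β c' u v) * χ u v = 0 :=
    sum_sub_qW_mul β c' (fun i j => (if pS i then (1:ℝ) else 0) * (if pT j then (1:ℝ) else 0))
  have hsplit : ∑ s ∈ S, ∑ t ∈ T, (β s t - qW β c s t)
      = ∑ u, ∑ v, (qW β c' u v - qW β c u v) * χ u v := by
    rw [← hind]
    have : ∀ u v : V, (β u v - qW β c u v) * χ u v
        = (β u v - qW β c' u v) * χ u v + (qW β c' u v - qW β c u v) * χ u v := by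
      intro u v; ring
    simp only [this, Finset.sum_add_distrib, horth, zero_add]
  rw [hsplit]
  have hCS : (∑ u, ∑ v, (qW β c' u v - qW β c u v) * χ u v)^2
      ≤ (∑ u, ∑ v, (qW β c' u v - qW β c u v)^2) * (∑ u, ∑ v, (χ u v)^2) := by
    have := Finset.sum_mul_sq_le_sq_mul_sq Finset.univ
      (fun p : V × V => qW β c' p.1 p.2 - qW β c p.1 p.2) (fun p : V × V => χ p.1 p.2)
    simpa [Fintype.sum_prod_type] using this
  have hχsq : ∑ u, ∑ v, (χ u v)^2 ≤ (Fintype.card V : ℝ)^2 := by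
    have : ∀ u v : V, (χ u v)^2 ≤ 1 := by
      intro u v
      simp only [hχ]
      by_cases h1 : pS (c' u) <;> by_cases h2 : pT (c' v) <;> simp [h1, h2]
    calc ∑ u, ∑ v, (χ u v)^2 ≤ ∑ _u : V, ∑ _v : V, (1:ℝ) :=
          Finset.sum_le_sum fun u _ => Finset.sum_le_sum fun v _ => this u v
      _ = (Fintype.card V : ℝ)^2 := by simp [sq]
  have hP := sum_sq_sub_qW β c c' f hf
  have hPnn : 0 ≤ ∑ u, ∑ v, (qW β c' u v - qW β c u v)^2 :=
    Finset.sum_nonneg fun u _ => Finset.sum_nonneg fun v _ => sq_nonneg _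
  calc (∑ u, ∑ v, (qW β c' u v - qW β c u v) * χ u v)^2
      ≤ (∑ u, ∑ v, (qW β c' u v - qW β c u v)^2) * (∑ u, ∑ v, (χ u v)^2) := hCS
    _ ≤ (∑ u, ∑ v, (qW β c' u v - qW β c u v)^2) * (Fintype.card V : ℝ)^2 := by
        exact mul_le_mul_of_nonneg_left hχsq hPnn
    _ = (Fintype.card V : ℝ)^2 * (energyW β c' - energyW β c) := by rw [hP]; ring

lemma clsOf_comp {J : Type} (e : I → J) (he : Function.Injective e) (c : V → I) (i : I) :
    clsOf (fun v => e (c v)) (e i) = clsOf c i := by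
  ext v; simp [clsOf, he.eq_iff]

lemma qW_comp {J : Type} (e : I → J) (he : Function.Injective e) (c : V → I) :
    qW β (fun v => e (c v)) = qW β c := by
  funext u v
  simp only [qW]
  rw [clsOf_comp e he c (c u), clsOf_comp e he c (c v)]

lemma energyW_comp {J : Type} (e : I → J) (he : Function.Injective e) (c : V → I) :
    energyW β (fun v => e (c v)) = energyW β c := by
  simp only [energyW, qW_comp e he c]

lemma step_refine (β : V → V → ℝ) {m : ℕ} (c : V → Fin m) (S T : Finset V) :
    ∃ c' : V → Fin (4*m),
      (∑ s ∈ S, ∑ t ∈ T, (β s t - qW β c s t))^2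
        ≤ (Fintype.card V : ℝ)^2 * (energyW β c' - energyW β c) := by
  classical
  set c₀ : V → Fin m × Bool × Bool := fun v => (c v, decide (v ∈ S), decide (v ∈ T)) with hc₀
  have e : (Fin m × Bool × Bool) ≃ Fin (4*m) :=
    Fintype.equivFinOfCardEq (by simp [Fintype.card_prod]; ring)
  refine ⟨fun v => e (c₀ v), ?_⟩
  rw [energyW_comp e e.injective c₀]
  refine defect_le β c c₀ Prod.fst (fun v => rfl) S T
    (fun i => i.2.1 = true) (fun v => ?_) (fun i => i.2.2 = true) (fun v => ?_)
  · simp [hc₀]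
  · simp [hc₀]

lemma iterate (β : V → V → ℝ) (hn : 0 < Fintype.card V) (ε : ℝ) (hε : 0 < ε) (t : ℕ) :
    ∃ m : ℕ, m ≤ 4^t ∧ ∃ c : V → Fin m,
      (∀ S T : Finset V,
        |∑ s ∈ S, ∑ t ∈ T, (β s t - qW β c s t)| ≤ ε * (Fintype.card V : ℝ)^2)
      ∨ (t : ℝ) * (ε^2 * (Fintype.card V : ℝ)^2) ≤ energyW β c := by
  induction t with
  | zero =>
    refine ⟨1, le_refl _, fun _ => 0, Or.inr ?_⟩
    simpa using energyW_nonneg (β := β) (fun _ => (0 : Fin 1))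
  | succ t ih =>
    obtain ⟨m, hm, c, H⟩ := ih
    have hm' : m ≤ 4^(t+1) := le_trans hm (Nat.pow_le_pow_right (by norm_num) (Nat.le_succ t))
    rcases H with h | h
    · exact ⟨m, hm', c, Or.inl h⟩
    by_cases hg : ∀ S T : Finset V,
        |∑ s ∈ S, ∑ t ∈ T, (β s t - qW β c s t)| ≤ ε * (Fintype.card V : ℝ)^2
    · exact ⟨m, hm', c, Or.inl hg⟩
    push_neg at hg
    obtain ⟨S, T, hST⟩ := hg
    obtain ⟨c', hc'⟩ := step_refine β c S T
    refine ⟨4*m, by calc 4*m ≤ 4*4^t := by omega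
                       _ = 4^(t+1) := by ring, c', Or.inr ?_⟩
    have hn' : (0:ℝ) < (Fintype.card V : ℝ)^2 := by positivity
    have hD : (ε * (Fintype.card V : ℝ)^2)^2
        ≤ (∑ s ∈ S, ∑ t ∈ T, (β s t - qW β c s t))^2 := by
      have h0 : 0 ≤ ε * (Fintype.card V : ℝ)^2 := by positivity
      calc (ε * (Fintype.card V : ℝ)^2)^2
          ≤ |∑ s ∈ S, ∑ t ∈ T, (β s t - qW β c s t)|^2 := by
            apply pow_le_pow_left₀ h0 hST.le
        _ = (∑ s ∈ S, ∑ t ∈ T, (β s t - qW β c s t))^2 := sq_abs _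
    push_cast
    nlinarith [hc', hD, mul_le_mul_of_nonneg_left h hn'.le, hn']

end Aux


-- The weight function of a simple graph: 1 on edges, 0 elsewhere.
noncomputable def adjW {V : Type} (G : SimpleGraph V) : V → V → ℝ :=
  fun u v => if G.Adj u v then 1 else 0

-- The normalized cut distance `d_□` between two edge-weighted graphs on the same
-- finite vertex set `V`:  `(1/|V|²) · max_{S,T ⊆ V} |e_β(S,T) − e_β'(S,T)|`.
noncomputable def cutDistW {V : Type} [Fintype V] (β β' : V → V → ℝ) : ℝ :=
  (⨆ p : Finset V × Finset V, |∑ s ∈ p.1, ∑ t ∈ p.2, (β s t - β' s t)|) /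
    ((Fintype.card V : ℝ) ^ 2)

-- The class of `v` under the partition of `V` given by the colouring `c : V → Fin k`.
noncomputable def classOf {V : Type} [Fintype V] {k : ℕ} (c : V → Fin k) (i : Fin k) :
    Finset V :=
  Finset.univ.filter (fun v => c v = i)

-- The quotient weighted graph `G_P` of `G` by the partition given by `c : V → Fin k`:
-- the weight of the pair `uv` is the edge density between the classes of `u` and `v`.
noncomputable def quotientW {V : Type} [Fintype V] {k : ℕ} (G : SimpleGraph V)
    (c : V → Fin k) : V → V → ℝ :=
  fun u v =>
    (∑ x ∈ classOf c (c u), ∑ y ∈ classOf c (c v), adjW G x y) /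
      (((classOf c (c u)).card : ℝ) * ((classOf c (c v)).card : ℝ))

lemma adjW_nonneg {V : Type} (G : SimpleGraph V) (u v : V) : 0 ≤ adjW G u v := by
  unfold adjW; split <;> norm_num

lemma adjW_le_one {V : Type} (G : SimpleGraph V) (u v : V) : adjW G u v ≤ 1 := by
  unfold adjW; split <;> norm_num

lemma classOf_eq_clsOf {V : Type} [Fintype V] {k : ℕ} (c : V → Fin k) (i : Fin k) :
    classOf c i = clsOf c i := by
  ext v; simp [classOf, clsOf]

lemma quotientW_eq_qW {V : Type} [Fintype V] {k : ℕ} (G : SimpleGraph V) (c : V → Fin k) :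
    quotientW G c = qW (adjW G) c := by
  funext u v
  simp only [quotientW, qW, classOf_eq_clsOf]

/-- Weak Regularity Lemma (Frieze–Kannan): every graph has a partition into at most `k`
classes such that `d_□(G, G_P) ≤ 2/√(log₂ k)`. -/
theorem weak_regularity_lemma (k : ℕ) (hk : 2 ≤ k) (V : Type) [Fintype V]
    (G : SimpleGraph V) :
    ∃ c : V → Fin k,
      cutDistW (adjW G) (quotientW G c) ≤ 2 / Real.sqrt (Real.logb 2 k) := by
  classical
  set L : ℝ := Real.logb 2 k with hLdef
  set ε : ℝ := 2 / Real.sqrt L with hεdef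
  have hk2 : (2:ℝ) ≤ (k:ℝ) := by exact_mod_cast hk
  have hL1 : 1 ≤ L := by
    rw [hLdef, show (1:ℝ) = Real.logb 2 2 by simp]
    exact Real.logb_le_logb_of_le (by norm_num) (by norm_num) hk2
  have hsL : 0 < Real.sqrt L := Real.sqrt_pos.2 (by linarith)
  have hε : 0 < ε := by positivity
  -- trivial case: no vertices
  by_cases hV : Fintype.card V = 0
  · haveI : IsEmpty V := Fintype.card_eq_zero_iff.mp hV
    refine ⟨fun _ => ⟨0, by omega⟩, ?_⟩
    have hsup : (⨆ p : Finset V × Finset V,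
        |∑ s ∈ p.1, ∑ t ∈ p.2,
          (adjW G s t - quotientW G (fun _ => (⟨0, by omega⟩ : Fin k)) s t)|) = 0 := by
      have : ∀ p : Finset V × Finset V,
          |∑ s ∈ p.1, ∑ t ∈ p.2,
            (adjW G s t - quotientW G (fun _ => (⟨0, by omega⟩ : Fin k)) s t)| = 0 := by
        intro p
        have h1 : p.1 = ∅ := Finset.eq_empty_of_isEmpty _
        simp [h1]
      simp only [this]
      exact ciSup_const
    rw [cutDistW, hsup]
    simp only [zero_div]
    positivity
  have hn : 0 < Fintype.card V := Nat.pos_of_ne_zero hV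
  have hn' : (0:ℝ) < (Fintype.card V : ℝ)^2 := by positivity
  set β : V → V → ℝ := adjW G with hβdef
  have hβ0 : ∀ u v, 0 ≤ β u v := adjW_nonneg G
  have hβ1 : ∀ u v, β u v ≤ 1 := adjW_le_one G
  -- reduction to the cut bound on all S, T
  have main : ∀ (c : V → Fin k),
      (∀ S T : Finset V,
        |∑ s ∈ S, ∑ t ∈ T, (β s t - qW β c s t)| ≤ ε * (Fintype.card V : ℝ)^2) →
      cutDistW (adjW G) (quotientW G c) ≤ ε := by
    intro c hc
    rw [quotientW_eq_qW, cutDistW, div_le_iff₀ hn']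
    exact ciSup_le fun p => hc p.1 p.2
  by_cases hL4 : L ≤ 4
  -- small k: the trivial bound `cutDist ≤ 1 ≤ ε` works
  · have hε1 : 1 ≤ ε := by
      rw [hεdef, le_div_iff₀ hsL]
      have : Real.sqrt L ≤ Real.sqrt 4 := Real.sqrt_le_sqrt hL4
      have h4 : Real.sqrt 4 = 2 := by
        rw [show (4:ℝ) = 2^2 by norm_num, Real.sqrt_sq (by norm_num)]
      linarith
    refine ⟨fun _ => ⟨0, by omega⟩, main _ fun S T => ?_⟩
    set c : V → Fin k := fun _ => ⟨0, by omega⟩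
    have hbd : ∀ s t : V, |β s t - qW β c s t| ≤ 1 := by
      intro s t
      have h1 := qW_nonneg hβ0 c s t
      have h2 := qW_le_one hβ1 c s t
      have h3 := hβ0 s t
      have h4 := hβ1 s t
      rw [abs_le]; constructor <;> linarith
    calc |∑ s ∈ S, ∑ t ∈ T, (β s t - qW β c s t)|
        ≤ ∑ s ∈ S, |∑ t ∈ T, (β s t - qW β c s t)| := Finset.abs_sum_le_sum_abs _ _
      _ ≤ ∑ s ∈ S, ∑ t ∈ T, |β s t - qW β c s t| :=
          Finset.sum_le_sum fun s _ => Finset.abs_sum_le_sum_abs _ _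
      _ ≤ ∑ _s ∈ S, ∑ _t ∈ T, (1:ℝ) :=
          Finset.sum_le_sum fun s _ => Finset.sum_le_sum fun t _ => hbd s t
      _ = (S.card : ℝ) * (T.card : ℝ) := by simp [mul_comm]
      _ ≤ (Fintype.card V : ℝ) * (Fintype.card V : ℝ) := by
          have h1 : (S.card : ℝ) ≤ Fintype.card V := by
            exact_mod_cast Finset.card_le_card (Finset.subset_univ S)
          have h2 : (T.card : ℝ) ≤ Fintype.card V := by
            exact_mod_cast Finset.card_le_card (Finset.subset_univ T)
          have h3 : (0:ℝ) ≤ (S.card : ℝ) := by positivity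
          nlinarith
      _ ≤ ε * (Fintype.card V : ℝ)^2 := by nlinarith
  -- main case: k ≥ 16
  · push_neg at hL4
    have hL0 : 0 < L := by linarith
    set t₀ : ℕ := ⌊L/4⌋₊ + 1 with ht₀
    have hfl : (⌊L/4⌋₊ : ℝ) ≤ L/4 := Nat.floor_le (by positivity)
    have ht₀L : L/4 < (t₀ : ℝ) := by
      rw [ht₀]; push_cast; exact Nat.lt_floor_add_one _
    have h4t₀ : (4:ℕ)^t₀ ≤ k := by
      have h2t : (2 * t₀ : ℝ) ≤ L := by
        rw [ht₀]; push_cast; linarith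
      have : ((4:ℕ)^t₀ : ℝ) = (2:ℝ)^((2*t₀ : ℕ) : ℝ) := by
        rw [Real.rpow_natCast]
        push_cast
        rw [pow_mul]
        norm_num
      have hle : ((4:ℕ)^t₀ : ℝ) ≤ (k:ℝ) := by
        rw [this]
        calc (2:ℝ)^((2*t₀ : ℕ) : ℝ) ≤ (2:ℝ)^L := by
              apply Real.rpow_le_rpow_of_exponent_le (by norm_num)
              push_cast; push_cast at h2t; linarith
          _ = (k:ℝ) := by
              rw [hLdef]
              exact Real.rpow_logb (by norm_num) (by norm_num) (by linarith)
      exact_mod_cast hle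
    have hε2 : ε^2 = 4 / L := by
      rw [hεdef, div_pow, Real.sq_sqrt (by linarith)]
      norm_num
    obtain ⟨m, hm, c, H⟩ := iterate β hn ε hε t₀
    have hmk : m ≤ k := le_trans hm h4t₀
    rcases H with hgood | hbad
    · -- transfer the colouring to `Fin k`
      refine ⟨fun v => Fin.castLE hmk (c v), main _ fun S T => ?_⟩
      rw [show qW β (fun v => Fin.castLE hmk (c v)) = qW β c from
        qW_comp (Fin.castLE hmk) (Fin.castLE_injective hmk) c]
      exact hgood S T
    · -- energy too large: impossible
      exfalso
      have hE := energyW_le hβ0 hβ1 c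
      have ht₀1 : 1 < (t₀:ℝ) * (4/L) := by
        have hLt : L < 4*(t₀:ℝ) := by linarith
        rw [show (t₀:ℝ) * (4/L) = (4*(t₀:ℝ))/L by ring, lt_div_iff₀ hL0]
        linarith
      rw [hε2] at hbad
      nlinarith
end

section
/- Counting Lemma: for all graphons U and W and every finite simple graph F, |t(F,U) − t(F,W)| ≤ |E(F)| · δ_□(U,W). -/
open MeasureTheory Set Filter

/-- The Lebesgue measure restricted to `[0,1]`. -/
noncomputable abbrev μ01 : MeasureTheory.Measure ℝ :=
  MeasureTheory.volume.restrict (Set.Icc (0:ℝ) 1)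

/-- A graphon: a symmetric measurable function `[0,1]² → [0,1]`
(defined on all of `ℝ²` for convenience). -/
def IsGraphon (W : ℝ → ℝ → ℝ) : Prop :=
  Measurable (Function.uncurry W) ∧ (∀ x y, W x y = W y x) ∧ ∀ x y, W x y ∈ Set.Icc (0:ℝ) 1

-- The homomorphism density `t(F,W)` of a finite simple graph `F` in a graphon `W`.
open scoped Classical in
noncomputable def homDensity {n : ℕ} (F : SimpleGraph (Fin n)) (W : ℝ → ℝ → ℝ) : ℝ :=
  ∫ x : Fin n → ℝ,
    (∏ p ∈ Finset.univ.filter (fun p : Fin n × Fin n => p.1 < p.2 ∧ F.Adj p.1 p.2),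
      W (x p.1) (x p.2)) ∂(MeasureTheory.Measure.pi fun _ => μ01)

/-- The cut norm `‖U‖_□` of a kernel `U`. -/
noncomputable def cutNorm (U : ℝ → ℝ → ℝ) : ℝ :=
  sSup { r : ℝ | ∃ S T : Set ℝ, MeasurableSet S ∧ MeasurableSet T ∧
    S ⊆ Set.Icc (0:ℝ) 1 ∧ T ⊆ Set.Icc (0:ℝ) 1 ∧
    r = |∫ x in S, ∫ y in T, U x y| }

/-- An invertible measure preserving map of `[0,1]` onto itself. -/
def IsInvMeasurePreserving (φ : ℝ → ℝ) : Prop :=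
  Set.MapsTo φ (Set.Icc (0:ℝ) 1) (Set.Icc (0:ℝ) 1) ∧
  MeasureTheory.MeasurePreserving φ μ01 μ01 ∧
  ∃ ψ : ℝ → ℝ, Set.MapsTo ψ (Set.Icc (0:ℝ) 1) (Set.Icc (0:ℝ) 1) ∧
    MeasureTheory.MeasurePreserving ψ μ01 μ01 ∧
    (∀ x ∈ Set.Icc (0:ℝ) 1, ψ (φ x) = x) ∧ (∀ x ∈ Set.Icc (0:ℝ) 1, φ (ψ x) = x)

/-- The cut distance `δ_□(U,W)` between two graphons. -/
noncomputable def cutDist (U W : ℝ → ℝ → ℝ) : ℝ :=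
  sInf { r : ℝ | ∃ φ : ℝ → ℝ, IsInvMeasurePreserving φ ∧
    r = cutNorm (fun x y => U x y - W (φ x) (φ y)) }

/-!
Replacing `U` by `W ∘ φ` one edge at a time writes `t(F,U) - t(F,W ∘ φ)` as a sum of `|E(F)|`
integrals of the form `∫ (U - W ∘ φ)(x_a, x_b) ∏_{e ≠ ab} K_e(x_{e₁}, x_{e₂})` with `[0,1]`-valued
kernels `K_e`. Once all coordinates but `x_a, x_b` are frozen, the product splits as
`f(x_a) g(x_b)` with `f, g` valued in `[0,1]`, and `∫∫ D(s,t) f(s) g(t)` is bounded by `‖D‖_□`: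
it is linear in `f`, so it only grows when `f` is replaced by the indicator of `{h > 0}`, where
`h(s) = ∫ D(s,t) g(t) dt`, and then likewise for `g`. Finally `t(F, W ∘ φ) = t(F, W)` for
measure preserving `φ`, and taking the infimum over `φ` gives the bound by `δ_□(U,W)`.
-/

section UpdateCoordinate

variable {ι α : Type*} [Fintype ι] [DecidableEq ι] [MeasurableSpace α]
  {ν : Measure α} [IsProbabilityMeasure ν]

theorem measurePreserving_update_pi (a : ι) :
    MeasurePreserving (fun p : (ι → α) × α => Function.update p.1 a p.2)
      ((Measure.pi fun _ => ν).prod ν) (Measure.pi fun _ => ν) := by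
  refine ⟨measurable_update', (Measure.pi_eq fun s hs => ?_).symm⟩
  have hpre : (fun p : (ι → α) × α => Function.update p.1 a p.2) ⁻¹' Set.univ.pi s
      = Set.univ.pi (Function.update s a Set.univ) ×ˢ s a := by
    ext ⟨x, t⟩
    simp only [mem_preimage, mem_univ_pi, mem_prod]
    refine ⟨fun h => ⟨fun i => ?_, by simpa using h a⟩, fun ⟨h, ht⟩ i => ?_⟩
    · rcases eq_or_ne i a with rfl | hi
      · simp
      · simpa [hi] using h i
    · rcases eq_or_ne i a with rfl | hi
      · simpa using ht
      · simpa [hi] using h i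
  rw [Measure.map_apply measurable_update' (.univ_pi hs), hpre, Measure.prod_prod,
    Measure.pi_pi, ← Finset.mul_prod_erase _ _ (Finset.mem_univ a), Function.update_self,
    measure_univ, one_mul, ← Finset.prod_erase_mul _ (fun i => ν (s i)) (Finset.mem_univ a)]
  congr 1
  exact Finset.prod_congr rfl fun i hi => by rw [Function.update_of_ne (Finset.ne_of_mem_erase hi)]

theorem integral_pi_eq_integral_integral_update (a : ι) {F : (ι → α) → ℝ}
    (hF : Integrable F (Measure.pi fun _ => ν)) :
    ∫ x, F x ∂Measure.pi (fun _ => ν) =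
      ∫ x, ∫ s, F (Function.update x a s) ∂ν ∂Measure.pi (fun _ => ν) := by
  have hmp := measurePreserving_update_pi (ν := ν) a
  conv_lhs => rw [← hmp.map_eq]
  rw [integral_map hmp.measurable.aemeasurable (by rw [hmp.map_eq]; exact hF.1)]
  exact integral_prod _ (hmp.integrable_comp_of_integrable hF)

theorem integral_pi_eq_integral_integral_integral_update (a b : ι) {F : (ι → α) → ℝ}
    (hF : Integrable F (Measure.pi fun _ => ν)) :
    ∫ x, F x ∂Measure.pi (fun _ => ν) = ∫ x, ∫ s, ∫ t,
      F (Function.update (Function.update x a s) b t) ∂ν ∂ν ∂Measure.pi (fun _ => ν) := by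
  have hG : Integrable (fun x => ∫ t, F (Function.update x b t) ∂ν) (Measure.pi fun _ => ν) :=
    ((measurePreserving_update_pi b).integrable_comp_of_integrable hF).integral_prod_left
  rw [integral_pi_eq_integral_integral_update b hF, integral_pi_eq_integral_integral_update a hG]

end UpdateCoordinate

instance isProbabilityMeasure_μ01 : IsProbabilityMeasure μ01 := ⟨by simp⟩

theorem integrable_of_abs_le {β : Type*} [MeasurableSpace β] {μ : Measure β} [IsFiniteMeasure μ]
    {f : β → ℝ} {C : ℝ} (hf : Measurable f) (hfC : ∀ x, |f x| ≤ C) : Integrable f μ :=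
  .of_bound hf.aestronglyMeasurable C (.of_forall hfC)

theorem abs_mul_le_of_mem_Icc {x y C : ℝ} (hx : |x| ≤ C) (hy : y ∈ Icc (0 : ℝ) 1) :
    |x * y| ≤ C := by
  rw [abs_mul, abs_of_nonneg hy.1]
  nlinarith [abs_nonneg x, hy.1, hy.2]

theorem integral_mul_le_setIntegral_pos {β : Type*} [MeasurableSpace β] {μ : Measure β}
    {w g : β → ℝ} (hw : Measurable w) (hwi : Integrable w μ) (hg : Measurable g)
    (hg01 : ∀ x, g x ∈ Icc (0 : ℝ) 1) :
    ∫ x, w x * g x ∂μ ≤ ∫ x in {x | 0 < w x}, w x ∂μ := by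
  have hS : MeasurableSet {x | 0 < w x} := measurableSet_lt measurable_const hw
  rw [← integral_indicator hS]
  refine integral_mono (hwi.mul_bdd hg.aestronglyMeasurable (c := 1) (.of_forall fun x => ?_))
    (hwi.indicator hS) fun x => ?_
  · simpa [abs_of_nonneg (hg01 x).1] using (hg01 x).2
  · by_cases hx : 0 < w x
    · simpa [hx] using mul_le_of_le_one_right hx.le (hg01 x).2
    · simpa [hx] using mul_nonpos_of_nonpos_of_nonneg (not_lt.mp hx) (hg01 x).1

section CutNorm

variable {D : ℝ → ℝ → ℝ} {C : ℝ}

theorem bddAbove_cutNorm_set (hDb : ∀ x y, |D x y| ≤ C) :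
    BddAbove {r : ℝ | ∃ S T : Set ℝ, MeasurableSet S ∧ MeasurableSet T ∧
      S ⊆ Icc (0 : ℝ) 1 ∧ T ⊆ Icc (0 : ℝ) 1 ∧ r = |∫ x in S, ∫ y in T, D x y|} := by
  refine ⟨C, ?_⟩
  rintro r ⟨S, T, -, -, hS, hT, rfl⟩
  have hC : 0 ≤ C := (abs_nonneg _).trans (hDb 0 0)
  rw [← Measure.restrict_restrict_of_subset hS, ← Measure.restrict_restrict_of_subset hT]
  have hbound : ∀ (A : Set ℝ) {h : ℝ → ℝ}, (∀ x, ‖h x‖ ≤ C) → ‖∫ x in A, h x ∂μ01‖ ≤ C :=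
    fun A h hh => (norm_setIntegral_le_of_norm_le_const (measure_lt_top _ _) fun x _ => hh x).trans
      (mul_le_of_le_one_right hC measureReal_le_one)
  exact hbound S fun x => hbound T fun y => hDb x y

theorem abs_setIntegral_setIntegral_le_cutNorm (hDb : ∀ x y, |D x y| ≤ C) {S T : Set ℝ}
    (hS : MeasurableSet S) (hT : MeasurableSet T) :
    |∫ x in S, ∫ y in T, D x y ∂μ01 ∂μ01| ≤ cutNorm D := by
  rw [Measure.restrict_restrict hS, Measure.restrict_restrict hT]
  exact le_csSup (bddAbove_cutNorm_set hDb) ⟨S ∩ Icc 0 1, T ∩ Icc 0 1,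
    hS.inter measurableSet_Icc, hT.inter measurableSet_Icc, inter_subset_right,
    inter_subset_right, rfl⟩

theorem cutNorm_neg : cutNorm (fun x y => -D x y) = cutNorm D := by
  simp only [cutNorm, integral_neg, abs_neg]

end CutNorm

section CutNormBilinear

variable {D : ℝ → ℝ → ℝ} {C : ℝ} {f g : ℝ → ℝ}

theorem integral_integral_mul_le_cutNorm (hD : Measurable (Function.uncurry D))
    (hDb : ∀ x y, |D x y| ≤ C) (hf : Measurable f) (hf01 : ∀ x, f x ∈ Icc (0 : ℝ) 1)
    (hg : Measurable g) (hg01 : ∀ x, g x ∈ Icc (0 : ℝ) 1) :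
    ∫ s, ∫ t, D s t * (f s * g t) ∂μ01 ∂μ01 ≤ cutNorm D := by
  have hDg : Measurable fun p : ℝ × ℝ => D p.1 p.2 * g p.2 := hD.mul (hg.comp measurable_snd)
  have hDint : ∀ (μ ν : Measure ℝ) [IsFiniteMeasure μ] [IsFiniteMeasure ν],
      Integrable (fun p : ℝ × ℝ => D p.1 p.2) (μ.prod ν) := fun _ _ _ _ =>
    integrable_of_abs_le hD fun p => hDb p.1 p.2
  have hDgint : ∀ (μ : Measure ℝ) [IsFiniteMeasure μ],
      Integrable (fun p : ℝ × ℝ => D p.1 p.2 * g p.2) (μ.prod μ01) := fun _ _ =>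
    integrable_of_abs_le hDg fun p => abs_mul_le_of_mem_Icc (hDb p.1 p.2) (hg01 p.2)
  set h := fun s => ∫ t, D s t * g t ∂μ01
  set S := {s | 0 < h s}
  set k := fun t => ∫ s in S, D s t ∂μ01
  set T := {t | 0 < k t}
  have hh : Measurable h := hDg.stronglyMeasurable.integral_prod_right'.measurable
  have hk : Measurable k := hD.stronglyMeasurable.integral_prod_left'.measurable
  calc ∫ s, ∫ t, D s t * (f s * g t) ∂μ01 ∂μ01
      = ∫ s, h s * f s ∂μ01 := by
        refine integral_congr_ae (.of_forall fun s => ?_)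
        simp only [h, ← integral_mul_const]
        congr 1 with t
        ring
    _ ≤ ∫ s in S, h s ∂μ01 :=
        integral_mul_le_setIntegral_pos hh (hDgint μ01).integral_prod_left hf hf01
    _ = ∫ t, k t * g t ∂μ01 := by
        simp only [h, k, ← integral_mul_const]
        exact integral_integral_swap (hDgint _)
    _ ≤ ∫ t in T, k t ∂μ01 :=
        integral_mul_le_setIntegral_pos hk (hDint _ _).integral_prod_right hg hg01
    _ = ∫ s in S, ∫ t in T, D s t ∂μ01 ∂μ01 := integral_integral_swap (hDint _ _).swap
    _ ≤ cutNorm D :=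
        (le_abs_self _).trans (abs_setIntegral_setIntegral_le_cutNorm hDb
          (measurableSet_lt measurable_const hh) (measurableSet_lt measurable_const hk))

theorem abs_integral_integral_mul_le_cutNorm (hD : Measurable (Function.uncurry D))
    (hDb : ∀ x y, |D x y| ≤ C) (hf : Measurable f) (hf01 : ∀ x, f x ∈ Icc (0 : ℝ) 1)
    (hg : Measurable g) (hg01 : ∀ x, g x ∈ Icc (0 : ℝ) 1) :
    |∫ s, ∫ t, D s t * (f s * g t) ∂μ01 ∂μ01| ≤ cutNorm D := by
  refine abs_le.mpr ⟨?_, integral_integral_mul_le_cutNorm hD hDb hf hf01 hg hg01⟩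
  have hneg := integral_integral_mul_le_cutNorm (D := fun x y => -D x y) hD.neg
    (fun x y => (abs_neg (D x y)).trans_le (hDb x y)) hf hf01 hg hg01
  simp only [neg_mul, integral_neg, cutNorm_neg] at hneg
  linarith

end CutNormBilinear

def IsUnitKernel (K : ℝ → ℝ → ℝ) : Prop :=
  Measurable (Function.uncurry K) ∧ ∀ x y, K x y ∈ Icc (0 : ℝ) 1

theorem IsGraphon.isUnitKernel {W : ℝ → ℝ → ℝ} (hW : IsGraphon W) : IsUnitKernel W :=
  ⟨hW.1, hW.2.2⟩

theorem IsUnitKernel.comp {K : ℝ → ℝ → ℝ} (hK : IsUnitKernel K) {φ : ℝ → ℝ} (hφ : Measurable φ) :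
    IsUnitKernel fun x y => K (φ x) (φ y) :=
  ⟨hK.1.comp ((hφ.comp measurable_fst).prodMk (hφ.comp measurable_snd)), fun _ _ => hK.2 _ _⟩

theorem IsUnitKernel.abs_sub_le_one {K L : ℝ → ℝ → ℝ} (hK : IsUnitKernel K) (hL : IsUnitKernel L)
    (x y : ℝ) : |K x y - L x y| ≤ 1 := by
  obtain ⟨hK0, hK1⟩ := hK.2 x y
  obtain ⟨hL0, hL1⟩ := hL.2 x y
  exact abs_sub_le_iff.mpr ⟨by linarith, by linarith⟩

section UnitKernel

variable {ι β : Type*} [MeasurableSpace β] {K : ι × ι → ℝ → ℝ → ℝ}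

theorem measurable_prod_unitKernel (hK : ∀ p, IsUnitKernel (K p)) (S : Finset (ι × ι))
    {u : β → ι → ℝ} (hu : Measurable u) :
    Measurable fun z => ∏ p ∈ S, K p (u z p.1) (u z p.2) :=
  Finset.measurable_prod _ fun p _ =>
    (hK p).1.comp (((measurable_pi_apply p.1).comp hu).prodMk ((measurable_pi_apply p.2).comp hu))

theorem prod_unitKernel_mem_Icc (hK : ∀ p, IsUnitKernel (K p)) (S : Finset (ι × ι)) (y : ι → ℝ) :
    ∏ p ∈ S, K p (y p.1) (y p.2) ∈ Icc (0 : ℝ) 1 :=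
  unitInterval.prod_mem fun p _ => (hK p).2 _ _

end UnitKernel

theorem abs_integral_mul_prod_le_cutNorm {ι : Type*} [Fintype ι] [DecidableEq ι] {a b : ι}
    (hab : a ≠ b) {D : ℝ → ℝ → ℝ} {C : ℝ} (hD : Measurable (Function.uncurry D))
    (hDb : ∀ x y, |D x y| ≤ C) {S : Finset (ι × ι)}
    (hS : ∀ p ∈ S, (p.1 ≠ a ∧ p.2 ≠ a) ∨ (p.1 ≠ b ∧ p.2 ≠ b))
    {K : ι × ι → ℝ → ℝ → ℝ} (hK : ∀ p, IsUnitKernel (K p)) :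
    |∫ x, D (x a) (x b) * ∏ p ∈ S, K p (x p.1) (x p.2) ∂Measure.pi fun _ => μ01| ≤
      cutNorm D := by
  have hint : Integrable (fun x : ι → ℝ => D (x a) (x b) * ∏ p ∈ S, K p (x p.1) (x p.2))
      (Measure.pi fun _ => μ01) :=
    integrable_of_abs_le
      (.mul (hD.comp (by fun_prop : Measurable fun x : ι → ℝ => (x a, x b)))
        (measurable_prod_unitKernel hK S measurable_id))
      fun x => abs_mul_le_of_mem_Icc (hDb _ _) (prod_unitKernel_mem_Icc hK S x)
  rw [integral_pi_eq_integral_integral_integral_update a b hint, ← Real.norm_eq_abs]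
  refine (norm_integral_le_of_norm_le_const (C := cutNorm D) (.of_forall fun x => ?_)).trans_eq
    (by simp)
  -- Freezing all coordinates but `a` and `b`, every other factor depends on one of them only.
  set Sb := S.filter fun p => p.1 = b ∨ p.2 = b
  set Sa := S.filter fun p => ¬(p.1 = b ∨ p.2 = b)
  set f := fun s => ∏ p ∈ Sa, K p (Function.update x a s p.1) (Function.update x a s p.2)
  set g := fun t => ∏ p ∈ Sb, K p (Function.update x b t p.1) (Function.update x b t p.2)
  have hsplit : ∀ s t, (fun y : ι → ℝ => D (y a) (y b) * ∏ p ∈ S, K p (y p.1) (y p.2))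
      (Function.update (Function.update x a s) b t) = D s t * (f s * g t) := by
    intro s t
    have hleft : ∀ i ≠ b, Function.update (Function.update x a s) b t i = Function.update x a s i :=
      fun i hi => Function.update_of_ne hi _ _
    have hright : ∀ i ≠ a,
        Function.update (Function.update x a s) b t i = Function.update x b t i :=
      fun i hi => by rw [Function.update_comm hab, Function.update_of_ne hi]
    simp only [← Finset.prod_filter_mul_prod_filter_not S (fun p => p.1 = b ∨ p.2 = b)]
    rw [Function.update_self, hleft a hab, Function.update_self, mul_comm (∏ p ∈ Sb, _)]
    congr 2
    · refine Finset.prod_congr rfl fun p hp => ?_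
      obtain ⟨hp1, hp2⟩ := not_or.mp (Finset.mem_filter.mp hp).2
      rw [hleft _ hp1, hleft _ hp2]
    · refine Finset.prod_congr rfl fun p hp => ?_
      obtain ⟨hpS, hpb⟩ := Finset.mem_filter.mp hp
      obtain ⟨hp1, hp2⟩ := (hS p hpS).resolve_right (by tauto)
      rw [hright _ hp1, hright _ hp2]
  simp only [hsplit]
  exact abs_integral_integral_mul_le_cutNorm hD hDb
    (measurable_prod_unitKernel hK Sa (measurable_update x)) (fun _ => prod_unitKernel_mem_Icc hK _ _)
    (measurable_prod_unitKernel hK Sb (measurable_update x)) (fun _ => prod_unitKernel_mem_Icc hK _ _)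

section KernelDensity

variable {ι : Type*} [Fintype ι] {A : Finset (ι × ι)} {K L : ι × ι → ℝ → ℝ → ℝ}

noncomputable def kernelDensity (A : Finset (ι × ι)) (K : ι × ι → ℝ → ℝ → ℝ) : ℝ :=
  ∫ x, ∏ p ∈ A, K p (x p.1) (x p.2) ∂Measure.pi fun _ : ι => μ01

theorem integrable_prod_unitKernel (hK : ∀ p, IsUnitKernel (K p)) (A : Finset (ι × ι)) :
    Integrable (fun x : ι → ℝ => ∏ p ∈ A, K p (x p.1) (x p.2)) (Measure.pi fun _ => μ01) :=
  integrable_of_abs_le (measurable_prod_unitKernel hK A measurable_id) fun x => by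
    rw [abs_of_nonneg (prod_unitKernel_mem_Icc hK A x).1]
    exact (prod_unitKernel_mem_Icc hK A x).2

theorem abs_kernelDensity_sub_update_le [LinearOrder ι] (hA : ∀ p ∈ A, p.1 < p.2) {e : ι × ι}
    (he : e ∈ A) (hK : ∀ p, IsUnitKernel (K p)) {V : ℝ → ℝ → ℝ} (hV : IsUnitKernel V) :
    |kernelDensity A K - kernelDensity A (Function.update K e V)| ≤
      cutNorm fun x y => K e x y - V x y := by
  have hKV : ∀ p, IsUnitKernel (Function.update K e V p) := fun p => by
    rcases eq_or_ne p e with rfl | hp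
    · simpa using hV
    · simpa [hp] using hK p
  have hdiff : ∀ x : ι → ℝ, ∏ p ∈ A, K p (x p.1) (x p.2) -
      ∏ p ∈ A, Function.update K e V p (x p.1) (x p.2) =
        (K e (x e.1) (x e.2) - V (x e.1) (x e.2)) * ∏ p ∈ A.erase e, K p (x p.1) (x p.2) := by
    intro x
    have hrest : ∏ p ∈ A.erase e, Function.update K e V p (x p.1) (x p.2) =
        ∏ p ∈ A.erase e, K p (x p.1) (x p.2) :=
      Finset.prod_congr rfl fun p hp => by rw [Function.update_of_ne (Finset.ne_of_mem_erase hp)]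
    rw [← Finset.mul_prod_erase A _ he, ← Finset.mul_prod_erase A _ he, hrest, Function.update_self]
    ring
  have hmiss : ∀ p ∈ A.erase e, (p.1 ≠ e.1 ∧ p.2 ≠ e.1) ∨ (p.1 ≠ e.2 ∧ p.2 ≠ e.2) := by
    intro p hp
    have hpe := Finset.ne_of_mem_erase hp
    have hp' := hA p (Finset.mem_of_mem_erase hp)
    have he' := hA e he
    by_contra h
    simp only [not_or, not_and_or, not_not] at h
    obtain ⟨h1 | h1, h2 | h2⟩ := h <;> first | exact hpe (Prod.ext h1 h2) | order
  rw [kernelDensity, kernelDensity, ← integral_sub (integrable_prod_unitKernel hK A)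
    (integrable_prod_unitKernel hKV A)]
  simp only [hdiff]
  exact abs_integral_mul_prod_le_cutNorm (D := fun x y => K e x y - V x y) (hA e he).ne
    ((hK e).1.sub hV.1) ((hK e).abs_sub_le_one hV) hmiss hK

theorem abs_kernelDensity_sub_le [LinearOrder ι] (hA : ∀ p ∈ A, p.1 < p.2)
    (hK : ∀ p, IsUnitKernel (K p)) (hL : ∀ p, IsUnitKernel (L p)) :
    |kernelDensity A K - kernelDensity A L| ≤ ∑ p ∈ A, cutNorm fun x y => K p x y - L p x y := by
  have hpiecewise : kernelDensity A (A.piecewise L K) = kernelDensity A L :=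
    integral_congr_ae (.of_forall fun x => Finset.prod_congr rfl fun p hp => by
      rw [Finset.piecewise_eq_of_mem _ _ _ hp])
  rw [← hpiecewise]
  -- Telescoping: the kernels are switched from `K` to `L` one edge at a time.
  refine Finset.induction_on' (motive := fun E =>
    |kernelDensity A K - kernelDensity A (E.piecewise L K)| ≤
      ∑ p ∈ E, cutNorm fun x y => K p x y - L p x y) A (by simp) ?_
  intro e E he _ heE ih
  have hE : ∀ p, IsUnitKernel (E.piecewise L K p) := fun p =>
    E.piecewise_cases L K (fun M => IsUnitKernel M) (hL p) (hK p)
  rw [Finset.piecewise_insert, Finset.sum_insert heE, add_comm]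
  calc |kernelDensity A K - kernelDensity A (Function.update (E.piecewise L K) e (L e))|
      ≤ |kernelDensity A K - kernelDensity A (E.piecewise L K)| +
        |kernelDensity A (E.piecewise L K) -
          kernelDensity A (Function.update (E.piecewise L K) e (L e))| := abs_sub_le _ _ _
    _ ≤ _ := by
      refine add_le_add ih ?_
      simpa [Finset.piecewise_eq_of_notMem _ _ _ heE] using
        abs_kernelDensity_sub_update_le hA he hE (hL e)

theorem kernelDensity_comp (hK : ∀ p, IsUnitKernel (K p)) {φ : ℝ → ℝ}
    (hφ : MeasurePreserving φ μ01 μ01) :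
    kernelDensity A (fun p x y => K p (φ x) (φ y)) = kernelDensity A K := by
  have hΦ : MeasurePreserving (fun x : ι → ℝ => fun i => φ (x i))
      (Measure.pi fun _ => μ01) (Measure.pi fun _ => μ01) :=
    measurePreserving_pi _ _ fun _ => hφ
  conv_rhs => rw [kernelDensity, ← hΦ.map_eq]
  rw [integral_map hΦ.measurable.aemeasurable]
  · rfl
  · rw [hΦ.map_eq]
    exact (measurable_prod_unitKernel hK A measurable_id).aestronglyMeasurable

end KernelDensity

open scoped Classical in
theorem abs_homDensity_sub_le {U W : ℝ → ℝ → ℝ} (hU : IsGraphon U) (hW : IsGraphon W)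
    {φ : ℝ → ℝ} (hφ : MeasurePreserving φ μ01 μ01) {n : ℕ} (F : SimpleGraph (Fin n)) :
    |homDensity F U - homDensity F W| ≤
      ((Finset.univ.filter (fun p : Fin n × Fin n => p.1 < p.2 ∧ F.Adj p.1 p.2)).card : ℝ) *
        cutNorm (fun x y => U x y - W (φ x) (φ y)) := by
  have hW' : homDensity F W = homDensity F fun x y => W (φ x) (φ y) :=
    (kernelDensity_comp (K := fun _ => W) (fun _ => hW.isUnitKernel) hφ).symm
  rw [hW', ← nsmul_eq_mul, ← Finset.sum_const]
  exact abs_kernelDensity_sub_le (fun p hp => (Finset.mem_filter.mp hp).2.1)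
    (fun _ => hU.isUnitKernel) (fun _ => hW.isUnitKernel.comp hφ.measurable)

theorem isInvMeasurePreserving_id : IsInvMeasurePreserving id :=
  ⟨mapsTo_id _, .id _, id, mapsTo_id _, .id _, fun _ _ => rfl, fun _ _ => rfl⟩

open scoped Classical in
theorem counting_lemma (U W : ℝ → ℝ → ℝ) (hU : IsGraphon U) (hW : IsGraphon W)
    {n : ℕ} (F : SimpleGraph (Fin n)) :
    |homDensity F U - homDensity F W| ≤
      ((Finset.univ.filter (fun p : Fin n × Fin n => p.1 < p.2 ∧ F.Adj p.1 p.2)).card : ℝ) *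
        cutDist U W := by
  rw [cutDist, ← smul_eq_mul, ← Real.sInf_smul_of_nonneg (Nat.cast_nonneg _)]
  refine le_csInf (Set.Nonempty.smul_set ⟨_, id, isInvMeasurePreserving_id, rfl⟩) ?_
  rintro _ ⟨_, ⟨φ, hφ, rfl⟩, rfl⟩
  exact abs_homDensity_sub_le hU hW hφ.2.1 F
end
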